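/- arXiv:1406.6440 — 3 statements merged into one kernel-verified Lean document; each statement's English description precedes it below -/
import Mathlib

section
/- For nonnegative real numbers λ_1,...,λ_n, the Minkowski sum λ_1 Δ_{1,n} + λ_2 Δ_{2,n} + ... + λ_n Δ_{n,n} equals the permutohedron P(λ_1+...+λ_n, λ_2+...+λ_n, ..., λ_n, 0). -/
/-
A hypersimplex is the permutohedron of a 0/1 vector `(1,…,1,0,…,0)`, and scaling by `λ ≥ 0` keeps
such a vector decreasing. For decreasing vectors `a`, `b` one has `P(a) + P(b) = P(a + b)`: every
linear functional attains its maximum over `P(a)`, `P(b)` and `P(a + b)` at the same permutation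
(the one sorting its coefficients), so the support functions add. Summing up, `∑ λ_k Δ_{k,n}` is the
permutohedron of `∑ λ_k (1,…,1,0,…,0)`, whose `j`-th entry is `λ_j + ⋯ + λ_n`.
-/

open scoped Pointwise
open MeasureTheory Nat

namespace MixedEulerian

/-- A division of a finite set `S` into an ordered sequence of blocks,
with all elements of earlier blocks strictly smaller than those of later blocks. -/
def IsDivision (C : List (Finset ℕ)) (S : Finset ℕ) : Prop :=
  (∀ s ∈ S, ∃ i, i < C.length ∧ s ∈ C.getD i ∅) ∧
  (∀ i, i < C.length → C.getD i ∅ ⊆ S) ∧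
  (∀ i j, i < j → j < C.length →
    ∀ s ∈ C.getD i ∅, ∀ t ∈ C.getD j ∅, s < t)

/-- Type A admissibility: `s ∈ C_i` is admissible iff `s = min C₁`, `s = max C_n`,
or `i` is strictly between the first and the last index. (Indices are 0-based.) -/
def AdmissibleA (C : List (Finset ℕ)) (s : ℕ) : Prop :=
  ∃ i, i < C.length ∧ s ∈ C.getD i ∅ ∧
    ((i = 0 ∧ ∀ t ∈ C.getD 0 ∅, s ≤ t) ∨
     (i = C.length - 1 ∧ ∀ t ∈ C.getD i ∅, t ≤ s) ∨
     (0 < i ∧ i + 1 < C.length))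

/-- Type A deletion of `s` from the division `C`. -/
def deleteA (C : List (Finset ℕ)) (s : ℕ) : List (Finset ℕ) :=
  let i := C.findIdx (fun b => decide (s ∈ b))
  let B := C.getD i ∅
  let lo := B.filter (fun t => t < s)
  let hi := B.filter (fun t => s < t)
  if C.length ≤ 1 then []
  else if i = 0 then (hi ∪ C.getD 1 ∅) :: C.drop 2
  else if i = C.length - 1 then C.take (i - 1) ++ [C.getD (i - 1) ∅ ∪ lo]
  else C.take (i - 1) ++ [C.getD (i - 1) ∅ ∪ lo, hi ∪ C.getD (i + 1) ∅] ++ C.drop (i + 2)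

/-- `w` is a (type A) `C`-permutation: each entry is admissible in the division
obtained by deleting the previous entries, and all elements get deleted. -/
def IsCPermA : List (Finset ℕ) → List ℕ → Prop
  | C, [] => ∀ B ∈ C, B = ∅
  | C, s :: w => AdmissibleA C s ∧ IsCPermA (deleteA C s) w

/-- Type B admissibility: `s ∈ C_i` is admissible iff `s = min C₁` or `i ≠ 0`. -/
def AdmissibleB (C : List (Finset ℕ)) (s : ℕ) : Prop :=
  ∃ i, i < C.length ∧ s ∈ C.getD i ∅ ∧
    ((i = 0 ∧ ∀ t ∈ C.getD 0 ∅, s ≤ t) ∨ i ≠ 0)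

/-- Type B deletion of `s` from the division `C`. -/
def deleteB (C : List (Finset ℕ)) (s : ℕ) : List (Finset ℕ) :=
  let i := C.findIdx (fun b => decide (s ∈ b))
  if i = C.length - 1 ∧ 0 < i then
    C.take (i - 1) ++ [C.getD (i - 1) ∅ ∪ ((C.getD i ∅).erase s)]
  else deleteA C s

/-- `w` is a type B `C`-permutation. -/
def IsCPermB : List (Finset ℕ) → List ℕ → Prop
  | C, [] => ∀ B ∈ C, B = ∅
  | C, s :: w => AdmissibleB C s ∧ IsCPermB (deleteB C s) w

/-- A sequence of elements that can be successively (type A) deleted from `C`. -/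
def AdmissibleSeqA : List (Finset ℕ) → List ℕ → Prop
  | _, [] => True
  | C, s :: w => AdmissibleA C s ∧ AdmissibleSeqA (deleteA C s) w

/-- Number of descents of a list: the number of adjacent pairs that decrease. -/
def listDescents {α : Type*} [LinearOrder α] (l : List α) : ℕ :=
  (l.zip l.tail).countP (fun p => decide (p.2 < p.1))

/-- Eulerian number `A(n,k)`: permutations of `{1,…,n}` with exactly `k-1` descents. -/
def eulerianA (n k : ℕ) : ℕ :=
  (List.range' 1 n).permutations.countP (fun l => decide (listDescents l = k - 1))

/-- `A(m,t;r)`: permutations of `{1,…,m+1}` with `t-1` descents and first entry `r+1`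
(declared to be `0` when `t = 0`; it vanishes automatically when `t > m+1`). -/
def eulerianFirst (m t r : ℕ) : ℕ :=
  if t = 0 then 0 else
    (List.range' 1 (m + 1)).permutations.countP
      (fun l => decide (listDescents l = t - 1 ∧ l.headI = r + 1))

/-- The index of `t` in the `C`-permutation `w`: the (1-based) position of the block
containing `t` just before `t` is deleted. -/
def indexFn (C : List (Finset ℕ)) : List ℕ → ℕ → ℕ
  | [], _ => 0
  | s :: w, t =>
      if t = s then C.findIdx (fun b => decide (t ∈ b)) + 1
      else indexFn (deleteA C s) w t

/-- An index function of `C`: any function sending each element of `C_i` into `{1,…,i}`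
(1-based). -/
def IsIndexFn (C : List (Finset ℕ)) (I : ℕ → ℕ) : Prop :=
  ∀ i, i < C.length → ∀ s ∈ C.getD i ∅, 1 ≤ I s ∧ I s ≤ i + 1

/-- `C` is superdiagonal: `|C₁| + ⋯ + |C_i| ≥ i` for all `i`. -/
def Superdiagonal (C : List (Finset ℕ)) : Prop :=
  ∀ i, i ≤ C.length → i ≤ ∑ j ∈ Finset.range i, (C.getD j ∅).card

/-- `C` is subdiagonal: `|C_n| + ⋯ + |C_{n-i+1}| ≥ i` for all `i`. -/
def Subdiagonal (C : List (Finset ℕ)) : Prop :=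
  ∀ i, i ≤ C.length → i ≤ ∑ j ∈ Finset.range i, (C.getD (C.length - 1 - j) ∅).card

/-- The canonical division of `{1,…,c.sum}` with block sizes given by `c`. -/
def divisionOf (c : List ℕ) : List (Finset ℕ) :=
  (List.range c.length).map (fun i => Finset.Ioc ((c.take i).sum) ((c.take (i + 1)).sum))

/-- The number of `C`-permutations for a division with block sizes `c`. -/
noncomputable def NPerm (c : List ℕ) : ℕ :=
  Nat.card {w : List ℕ // IsCPermA (divisionOf c) w}

/-- The division of `{1,…,n}` with all elements in (1-based) position `k`. -/
def midDivision (n k : ℕ) : List (Finset ℕ) :=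
  List.replicate (k - 1) ∅ ++ [Finset.Icc 1 n] ++ List.replicate (n - k) ∅

/-- The hypersimplex `Δ_{k,n} ⊆ ℝ^{n+1}`. -/
def hypersimplex (n k : ℕ) : Set (Fin (n + 1) → ℝ) :=
  convexHull ℝ {x | ∃ T : Finset (Fin (n + 1)), T.card = k ∧
    x = fun i => if i ∈ T then (1 : ℝ) else 0}

/-- The permutohedron `P(y₁,…,y_m) ⊆ ℝ^m`. -/
def permutohedron {m : ℕ} (y : Fin m → ℝ) : Set (Fin m → ℝ) :=
  convexHull ℝ {x | ∃ w : Equiv.Perm (Fin m), x = y ∘ w}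

/-- The polytope `Γ_{k,n} ⊆ ℝ^n`, the convex hull of all `±e_{i₁} ± ⋯ ± e_{i_k}`. -/
def gammaPolytope (n k : ℕ) : Set (Fin n → ℝ) :=
  convexHull ℝ {x | ∃ T : Finset (Fin n), T.card = k ∧ ∃ ε : Fin n → ℝ,
    (∀ i, ε i = 1 ∨ ε i = -1) ∧ x = fun i => if i ∈ T then ε i else 0}

/-- The signed permutohedron `SP(y₁,…,y_n) ⊆ ℝ^n`. -/
def signedPermutohedron {m : ℕ} (y : Fin m → ℝ) : Set (Fin m → ℝ) :=
  convexHull ℝ {x | ∃ w : Equiv.Perm (Fin m), ∃ ε : Fin m → ℝ,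
    (∀ i, ε i = 1 ∨ ε i = -1) ∧ x = fun i => ε i * y (w i)}

section Permutohedron

variable {m : ℕ}

lemma isClosed_permutohedron (y : Fin m → ℝ) : IsClosed (permutohedron y) :=
  Set.Finite.isClosed_convexHull ℝ <|
    (Set.finite_range fun w : Equiv.Perm (Fin m) => y ∘ w).subset fun _ ⟨w, hw⟩ => ⟨w, hw.symm⟩

lemma permutohedron_zero : permutohedron (0 : Fin m → ℝ) = {0} := by
  have : {x | ∃ w : Equiv.Perm (Fin m), x = (0 : Fin m → ℝ) ∘ w} = {0} :=
    Set.eq_singleton_iff_unique_mem.2 ⟨⟨1, rfl⟩, fun _ ⟨_, hw⟩ => hw⟩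
  rw [permutohedron, this]
  exact convexHull_singleton 0

lemma smul_permutohedron (c : ℝ) (y : Fin m → ℝ) :
    c • permutohedron y = permutohedron (c • y) := by
  rw [permutohedron, permutohedron, ← convexHull_smul]
  congr 1
  ext x
  constructor
  · rintro ⟨_, ⟨w, rfl⟩, rfl⟩
    exact ⟨w, rfl⟩
  · rintro ⟨w, rfl⟩
    exact ⟨y ∘ w, ⟨w, rfl⟩, rfl⟩

lemma exists_perm_apply_comp_le_of_antitone (f : (Fin m → ℝ) →ₗ[ℝ] ℝ) :
    ∃ σ : Equiv.Perm (Fin m), ∀ y : Fin m → ℝ, Antitone y →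
      ∀ π : Equiv.Perm (Fin m), f (y ∘ π) ≤ f (y ∘ σ) := by
  set c : Fin m → ℝ := fun i => f fun j => if i = j then 1 else 0
  have hf : ∀ x, f x = ∑ i, c i • x i := fun x => by
    simp only [LinearMap.pi_apply_eq_sum_univ f x, smul_eq_mul, c, mul_comm]
  set ρ := Tuple.sort (-c)
  have hρ : ∀ i j, c j < c i → ρ.symm i < ρ.symm j := fun i j hc => by
    by_contra! h
    have := Tuple.monotone_sort (-c) h
    simp only [Function.comp_apply, Pi.neg_apply, neg_le_neg_iff, ρ, Equiv.apply_symm_apply]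
      at this
    linarith
  refine ⟨ρ.symm, fun y hy π => ?_⟩
  have hmono : Monovary c (y ∘ ρ.symm) := fun i j hlt => by
    by_contra! hc
    exact hlt.not_ge (hy (hρ i j hc).le)
  have := hmono.sum_smul_comp_perm_le_sum_smul (σ := ρ * π)
  simpa [hf] using this

lemma comp_add_comp_mem_permutohedron_add {a b : Fin m → ℝ} (ha : Antitone a) (hb : Antitone b)
    (σ τ : Equiv.Perm (Fin m)) : a ∘ σ + b ∘ τ ∈ permutohedron (a + b) := by
  by_contra hx
  obtain ⟨f, u, hfP, hfx⟩ := geometric_hahn_banach_closed_point (convex_convexHull ℝ _)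
    (isClosed_permutohedron (a + b)) hx
  obtain ⟨ρ, hρ⟩ := exists_perm_apply_comp_le_of_antitone f.toLinearMap
  have hvert : f ((a + b) ∘ ρ) < u := hfP _ (subset_convexHull ℝ _ ⟨ρ, rfl⟩)
  have hσ := hρ a ha σ
  have hτ := hρ b hb τ
  simp only [ContinuousLinearMap.coe_coe] at hσ hτ
  rw [show (a + b) ∘ ρ = a ∘ ρ + b ∘ ρ from rfl, map_add] at hvert
  rw [map_add] at hfx
  linarith

theorem permutohedron_add {a b : Fin m → ℝ} (ha : Antitone a) (hb : Antitone b) :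
    permutohedron a + permutohedron b = permutohedron (a + b) := by
  apply Set.Subset.antisymm
  · rw [permutohedron, permutohedron, ← convexHull_add]
    refine convexHull_min ?_ (convex_convexHull ℝ _)
    rintro _ ⟨_, ⟨σ, rfl⟩, _, ⟨τ, rfl⟩, rfl⟩
    exact comp_add_comp_mem_permutohedron_add ha hb σ τ
  · refine convexHull_min ?_ ((convex_convexHull ℝ _).add (convex_convexHull ℝ _))
    rintro _ ⟨w, rfl⟩
    exact Set.add_mem_add (subset_convexHull ℝ _ ⟨w, rfl⟩) (subset_convexHull ℝ _ ⟨w, rfl⟩)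

theorem sum_permutohedron {ι : Type*} (s : Finset ι) {y : ι → Fin m → ℝ}
    (hy : ∀ i ∈ s, Antitone (y i)) :
    ∑ i ∈ s, permutohedron (y i) = permutohedron (∑ i ∈ s, y i) := by
  classical
  induction s using Finset.induction_on with
  | empty => rw [Finset.sum_empty, Finset.sum_empty, permutohedron_zero]; rfl
  | insert a s has ih =>
    have hs : Antitone (∑ i ∈ s, y i) := fun j k hjk => by
      simp only [Finset.sum_apply]
      exact Finset.sum_le_sum fun i hi => hy i (Finset.mem_insert_of_mem hi) hjk
    rw [Finset.sum_insert has, Finset.sum_insert has,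
      ih fun i hi => hy i (Finset.mem_insert_of_mem hi),
      permutohedron_add (hy a (Finset.mem_insert_self a s)) hs]

end Permutohedron

lemma setOf_indicator_card_eq_perm_orbit {m : ℕ} (S : Finset (Fin m)) :
    {x | ∃ T : Finset (Fin m), T.card = S.card ∧ x = fun i => if i ∈ T then (1 : ℝ) else 0} =
      {x | ∃ w : Equiv.Perm (Fin m), x = (fun i => if i ∈ S then (1 : ℝ) else 0) ∘ w} := by
  ext x
  constructor
  · rintro ⟨T, hT, rfl⟩
    have := Set.powersetCard.isPretransitive (α := Fin m) (n := S.card)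
    obtain ⟨g, hg⟩ := MulAction.exists_smul_eq (Equiv.Perm (Fin m))
      (⟨S, rfl⟩ : Set.powersetCard (Fin m) S.card) ⟨T, hT⟩
    have hg : g • S = T := congrArg Subtype.val hg
    refine ⟨g⁻¹, funext fun i => ?_⟩
    simp only [Function.comp_apply, ← hg, ← Finset.inv_smul_mem_iff, Equiv.Perm.smul_def]
  · rintro ⟨w, rfl⟩
    refine ⟨w⁻¹ • S, Finset.card_smul_finset _ _, funext fun i => ?_⟩
    simp [Finset.mem_inv_smul_finset_iff]

theorem hypersimplex_eq_permutohedron {n k : ℕ} (hk : k ≤ n + 1) :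
    hypersimplex n k = permutohedron fun j : Fin (n + 1) => if (j : ℕ) < k then (1 : ℝ) else 0 := by
  have hcard : (Finset.univ.filter fun j : Fin (n + 1) => (j : ℕ) < k).card = k := by
    rw [Fin.card_filter_val_lt, min_eq_right hk]
  have := setOf_indicator_card_eq_perm_orbit (Finset.univ.filter fun j : Fin (n + 1) => (j : ℕ) < k)
  rw [hcard] at this
  rw [hypersimplex, permutohedron, this]
  simp

/-- `λ₁Δ_{1,n} + ⋯ + λ_nΔ_{n,n} = P(λ₁+⋯+λ_n, λ₂+⋯+λ_n, …, λ_n, 0)`. -/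
theorem minkowski_sum_hypersimplices (n : ℕ) (lam : Fin n → ℝ) (hlam : ∀ i, 0 ≤ lam i) :
    ∑ i : Fin n, lam i • hypersimplex n ((i : ℕ) + 1) =
      permutohedron (fun j : Fin (n + 1) =>
        ∑ i ∈ Finset.univ.filter (fun i : Fin n => (j : ℕ) ≤ (i : ℕ)), lam i) := by
  set e : Fin n → Fin (n + 1) → ℝ := fun i j => if (j : ℕ) < i + 1 then lam i else 0
  have he : ∀ i, lam i • hypersimplex n ((i : ℕ) + 1) = permutohedron (e i) := fun i => by
    rw [hypersimplex_eq_permutohedron (by omega), smul_permutohedron]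
    congr 1
    funext j
    simp [e]
  have he_anti : ∀ i ∈ Finset.univ, Antitone (e i) := fun i _ j k hjk => by
    simp only [e]
    split_ifs <;> first | exact le_rfl | exact hlam i | omega
  rw [Finset.sum_congr rfl fun i _ => he i, sum_permutohedron _ he_anti]
  congr 1
  funext j
  rw [Finset.sum_apply, Finset.sum_filter]
  exact Finset.sum_congr rfl fun i _ => if_congr (by omega) rfl rfl

end MixedEulerian
end

section
/- Let y_1 ≥ ... ≥ y_{n+1} be real numbers, let P = P(y_1,...,y_{n+1}) be the permutohedron, fix y_{n+1} ≤ x ≤ y_1, and let i be such that y_{i+1} ≤ x ≤ y_i. Then the cross section of P with first coordinate equal to x is {x} × P(y_1,...,y_{i-1}, y_i + y_{i+1} - x, y_{i+2},...,y_{n+1}). -/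
/-!
For antitone `y`, Rado's theorem describes the permutohedron by majorization: `p ∈ P(y)` iff
`∑ p = ∑ y` and any `k` coordinates of `p` sum to at most `y₁ + ⋯ + y_k`. For `p = (x, q)` with
`y_{i+1} ≤ x ≤ y_i` these inequalities say exactly that `q` is majorized by
`y' = (y₁, …, y_{i-1}, y_i + y_{i+1} - x, y_{i+2}, …, y_{n+1})`: this `y'` is again antitone and
`y'₁ + ⋯ + y'_k = min (y₁ + ⋯ + y_k) (y₁ + ⋯ + y_{k+1} - x)`.
Rado's theorem itself follows from the same computation by induction on the dimension, because
`(x, y' ∘ w)` is a convex combination of the two vertices of `P(y)` obtained from `y` by moving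
`y_i`, resp. `y_{i+1}`, to the front and permuting the remaining entries by `w`.
-/

open scoped Pointwise
open MeasureTheory Nat

namespace MixedEulerian

section CrossSection

open Finset

theorem sum_le_sum_of_card_eq_of_forall_le {ι M : Type*} [AddCommMonoid M] [LinearOrder M]
    [IsOrderedAddMonoid M] {A B : Finset ι} (f : ι → M) (hAB : #A = #B)
    (h : ∀ a ∈ A, ∀ b ∈ B, f a ≤ f b) : ∑ a ∈ A, f a ≤ ∑ b ∈ B, f b := by
  rcases A.eq_empty_or_nonempty with rfl | hA
  · rw [card_empty, eq_comm, Finset.card_eq_zero] at hAB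
    simp [hAB]
  calc ∑ a ∈ A, f a ≤ #A • A.sup' hA f := sum_le_card_nsmul A f _ fun a ha => le_sup' f ha
    _ = #B • A.sup' hA f := by rw [hAB]
    _ ≤ ∑ b ∈ B, f b :=
      card_nsmul_le_sum B f _ fun b hb => sup'_le hA f fun a ha => h a ha b hb

variable {m : ℕ}

def prefixSum (y : Fin m → ℝ) (k : ℕ) : ℝ := ∑ j : Fin m with j.val < k, y j

@[simp]
theorem prefixSum_zero (y : Fin m → ℝ) : prefixSum y 0 = 0 := by
  simp [prefixSum]

theorem prefixSum_succ (y : Fin m → ℝ) {k : ℕ} (hk : k < m) :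
    prefixSum y (k + 1) = prefixSum y k + y ⟨k, hk⟩ := by
  have : ({j : Fin m | j.val < k + 1} : Finset (Fin m)) =
      insert ⟨k, hk⟩ ({j : Fin m | j.val < k} : Finset (Fin m)) := by
    ext j
    simp [Fin.ext_iff]
    omega
  rw [prefixSum, this, sum_insert (by simp), add_comm]
  rfl

theorem prefixSum_of_le (y : Fin m → ℝ) {k : ℕ} (hk : m ≤ k) :
    prefixSum y k = ∑ j, y j := by
  rw [prefixSum, filter_true_of_mem fun j _ => j.2.trans_le hk]

theorem sum_le_prefixSum {y : Fin m → ℝ} (hy : Antitone y) (T : Finset (Fin m)) :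
    ∑ j ∈ T, y j ≤ prefixSum y #T := by
  set F : Finset (Fin m) := {j : Fin m | j.val < #T}
  have hF : #F = #T := by
    simp [F, Fin.card_filter_val_lt, (card_le_univ T).trans_eq (Fintype.card_fin m)]
  have hdiff : ∑ j ∈ T \ F, y j ≤ ∑ j ∈ F \ T, y j :=
    sum_le_sum_of_card_eq_of_forall_le y (card_sdiff_comm hF.symm) fun a ha b hb => by
      simp only [F, mem_sdiff, mem_filter, mem_univ, true_and] at ha hb
      exact hy (Fin.le_def.2 (by omega))
  have := sum_sdiff_sub_sum_sdiff (s₁ := F) (s₂ := T) (f := y)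
  rw [prefixSum]
  linarith

theorem convex_permutohedron (y : Fin m → ℝ) : Convex ℝ (permutohedron y) :=
  convex_convexHull ℝ _

theorem comp_mem_permutohedron (y : Fin m → ℝ) (w : Equiv.Perm (Fin m)) :
    y ∘ w ∈ permutohedron y :=
  subset_convexHull ℝ _ ⟨w, rfl⟩

theorem self_mem_permutohedron (y : Fin m → ℝ) : y ∈ permutohedron y := by
  simpa using comp_mem_permutohedron y 1

theorem comp_mem_permutohedron_of_mem {y p : Fin m → ℝ} (hp : p ∈ permutohedron y)
    (σ : Equiv.Perm (Fin m)) : p ∘ σ ∈ permutohedron y := by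
  refine convexHull_min ?_
    ((convex_permutohedron y).linear_preimage (LinearMap.funLeft ℝ ℝ σ)) hp
  rintro _ ⟨w, rfl⟩
  exact comp_mem_permutohedron y (σ.trans w)

/-- For antitone `y`, `prefixSum y #S` is the sum of the `#S` largest entries of `y`. -/
def IsMajorizedBy (p y : Fin m → ℝ) : Prop :=
  ∑ j, p j = ∑ j, y j ∧ ∀ S : Finset (Fin m), ∑ j ∈ S, p j ≤ prefixSum y #S

theorem convex_setOf_isMajorizedBy (y : Fin m → ℝ) : Convex ℝ {p | IsMajorizedBy p y} := by
  rintro p ⟨hp, hpS⟩ q ⟨hq, hqS⟩ a b ha hb hab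
  have hsum (S : Finset (Fin m)) :
      ∑ j ∈ S, (a • p + b • q) j = a * ∑ j ∈ S, p j + b * ∑ j ∈ S, q j := by
    simp [sum_add_distrib, mul_sum]
  refine ⟨?_, fun S => ?_⟩
  · rw [hsum, hp, hq, ← add_mul, hab, one_mul]
  · calc ∑ j ∈ S, (a • p + b • q) j
        ≤ a * prefixSum y #S + b * prefixSum y #S := by
          rw [hsum]
          gcongr
          exacts [hpS S, hqS S]
      _ = prefixSum y #S := by rw [← add_mul, hab, one_mul]

theorem isMajorizedBy_of_mem_permutohedron {y p : Fin m → ℝ} (hy : Antitone y)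
    (hp : p ∈ permutohedron y) : IsMajorizedBy p y := by
  refine convexHull_min ?_ (convex_setOf_isMajorizedBy y) hp
  rintro _ ⟨w, rfl⟩
  refine ⟨Equiv.sum_comp w y, fun S => ?_⟩
  simpa using sum_le_prefixSum hy (S.map w.toEmbedding)

theorem IsMajorizedBy.apply_zero_mem_Icc {n : ℕ} {y p : Fin (n + 1) → ℝ}
    (hp : IsMajorizedBy p y) : p 0 ∈ Set.Icc (y (Fin.last n)) (y 0) := by
  have hfirst := hp.2 {0}
  have hrest := hp.2 {0}ᶜ
  have htotal : prefixSum y (n + 1) = prefixSum y n + y (Fin.last n) :=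
    prefixSum_succ y n.lt_succ_self
  rw [prefixSum_of_le y le_rfl, ← hp.1, ← sum_compl_add_sum {0}] at htotal
  simp only [sum_singleton, card_singleton, prefixSum_succ y n.succ_pos, prefixSum_zero,
    card_compl, Fintype.card_fin, add_tsub_cancel_right] at hfirst hrest htotal
  exact ⟨by linarith, by simpa using hfirst⟩

theorem forall_finset_fin_succ {n : ℕ} {P : Finset (Fin (n + 1)) → Prop} :
    (∀ S, P S) ↔ ∀ S : Finset (Fin n),
      P (S.map (Fin.succEmb n)) ∧ P (insert 0 (S.map (Fin.succEmb n))) := by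
  refine ⟨fun h S => ⟨h _, h _⟩, fun h S => ?_⟩
  obtain ⟨hwithout, hwith⟩ := h {j | j.succ ∈ S}
  by_cases h0 : 0 ∈ S
  · convert hwith
    ext j
    cases j using Fin.cases <;> simp [h0]
  · convert hwithout
    ext j
    cases j using Fin.cases <;> simp [h0]

theorem exists_succ_le_le_castSucc {α : Type*} [LinearOrder α] :
    ∀ {n : ℕ} (y : Fin (n + 2) → α) {x : α}, y (Fin.last _) ≤ x → x ≤ y 0 →
      ∃ i : Fin (n + 1), y i.succ ≤ x ∧ x ≤ y i.castSucc
  | n, y, x, hlast, hzero => by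
    by_cases h : y 1 ≤ x
    · exact ⟨0, h, hzero⟩
    cases n with
    | zero => exact absurd hlast h
    | succ n =>
      obtain ⟨i, hi⟩ := exists_succ_le_le_castSucc (y ∘ Fin.succ) hlast (not_le.1 h).le
      exact ⟨i.succ, hi⟩

section SectionVector

variable {n : ℕ} {y : Fin (n + 1) → ℝ} {x : ℝ} {i : Fin n}

/-- The vector `(y₁, …, y_{i-1}, y_i + y_{i+1} - x, y_{i+2}, …, y_{n+1})` of the paper, with
`i` and `j` counted from `0`. -/
def sectionVector (y : Fin (n + 1) → ℝ) (x : ℝ) (i : Fin n) : Fin n → ℝ := fun j =>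
  if (j : ℕ) < (i : ℕ) then y j.castSucc
  else if j = i then y i.castSucc + y i.succ - x
  else y j.succ

theorem succ_le_sectionVector (hy : Antitone y) (h2 : x ≤ y i.castSucc) (j : Fin n) :
    y j.succ ≤ sectionVector y x i j := by
  unfold sectionVector
  split_ifs with hji hij
  · exact hy (Fin.castSucc_le_succ j)
  · subst hij; linarith
  · exact le_rfl

theorem sectionVector_le_castSucc (hy : Antitone y) (h1 : y i.succ ≤ x) (j : Fin n) :
    sectionVector y x i j ≤ y j.castSucc := by
  unfold sectionVector
  split_ifs with hji hij
  · exact le_rfl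
  · subst hij; linarith
  · exact hy (Fin.castSucc_le_succ j)

theorem sectionVector_antitone (hy : Antitone y) (h1 : y i.succ ≤ x) (h2 : x ≤ y i.castSucc) :
    Antitone (sectionVector y x i) := by
  intro a b hab
  rcases hab.eq_or_lt with rfl | hab
  · exact le_rfl
  calc sectionVector y x i b ≤ y b.castSucc := sectionVector_le_castSucc hy h1 b
    _ ≤ y a.succ := hy (Fin.succ_le_castSucc_iff.2 hab)
    _ ≤ sectionVector y x i a := succ_le_sectionVector hy h2 a

theorem prefixSum_sectionVector (y : Fin (n + 1) → ℝ) (x : ℝ) (i : Fin n) {k : ℕ}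
    (hk : k ≤ n) :
    prefixSum (sectionVector y x i) k =
      if k ≤ i then prefixSum y k else prefixSum y (k + 1) - x := by
  obtain ⟨i, hi⟩ := i
  induction k with
  | zero => simp
  | succ k ih =>
    rw [prefixSum_succ _ hk, ih (by omega), prefixSum_succ y (by omega : k + 1 < n + 1),
      prefixSum_succ y (by omega : k < n + 1)]
    simp only [sectionVector, Fin.mk.injEq, Fin.castSucc_mk, Fin.succ_mk]
    split_ifs <;> first | omega | (subst k; ring) | ring

theorem sum_sectionVector (y : Fin (n + 1) → ℝ) (x : ℝ) (i : Fin n) :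
    ∑ j, sectionVector y x i j = ∑ j, y j - x := by
  rw [← prefixSum_of_le _ le_rfl, prefixSum_sectionVector y x i le_rfl,
    if_neg (by omega), prefixSum_of_le y le_rfl]

theorem le_prefixSum_sectionVector_iff (hy : Antitone y) (h1 : y i.succ ≤ x)
    (h2 : x ≤ y i.castSucc) {k : ℕ} (hk : k ≤ n) {a : ℝ} :
    a ≤ prefixSum (sectionVector y x i) k ↔
      a ≤ prefixSum y k ∧ x + a ≤ prefixSum y (k + 1) := by
  have hk' : k < n + 1 := by omega
  rw [prefixSum_sectionVector y x i hk, prefixSum_succ y hk']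
  split_ifs with hki
  · have : x ≤ y ⟨k, hk'⟩ := h2.trans (hy (Fin.le_def.2 hki))
    constructor
    · intro h; constructor <;> linarith
    · exact And.left
  · have : y ⟨k, hk'⟩ ≤ x := (hy (Fin.le_def.2 (by simp; omega))).trans h1
    constructor
    · intro h; constructor <;> linarith
    · intro h; linarith [h.2]

theorem isMajorizedBy_cons_iff (hy : Antitone y) (h1 : y i.succ ≤ x) (h2 : x ≤ y i.castSucc)
    {q : Fin n → ℝ} :
    IsMajorizedBy (Fin.cons x q : Fin (n + 1) → ℝ) y ↔
      IsMajorizedBy q (sectionVector y x i) := by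
  unfold IsMajorizedBy
  rw [Fin.sum_cons, sum_sectionVector, eq_sub_iff_add_eq', forall_finset_fin_succ]
  refine and_congr_right' (forall_congr' fun S => ?_)
  rw [le_prefixSum_sectionVector_iff hy h1 h2 ((card_le_univ S).trans_eq (Fintype.card_fin n))]
  simp [sum_insert, card_insert_of_notMem, Fin.succ_ne_zero]

theorem cons_sectionVector_mem_permutohedron (h1 : y i.succ ≤ x) (h2 : x ≤ y i.castSucc) :
    (Fin.cons x (sectionVector y x i) : Fin (n + 1) → ℝ) ∈ permutohedron y := by
  have hx : x ∈ segment ℝ (y i.succ) (y i.castSucc) := by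
    rw [segment_eq_Icc (h1.trans h2)]
    exact ⟨h1, h2⟩
  obtain ⟨a, b, ha, hb, hab, hx⟩ := hx
  simp only [smul_eq_mul] at hx
  -- `y ∘ c.cycleRange.symm` is `y` with its entry `y c` moved to the front.
  have hcomb : (Fin.cons x (sectionVector y x i) : Fin (n + 1) → ℝ) =
      a • (y ∘ i.succ.cycleRange.symm) + b • (y ∘ i.castSucc.cycleRange.symm) := by
    ext j
    cases j using Fin.cases with
    | zero => simpa using hx.symm
    | succ j =>
      simp only [Fin.cons_succ, Pi.add_apply, Pi.smul_apply, Function.comp_apply,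
        Fin.cycleRange_symm_succ, smul_eq_mul, sectionVector]
      rcases lt_trichotomy j i with hji | rfl | hij
      · rw [if_pos (Fin.lt_def.1 hji),
          Fin.succAbove_of_castSucc_lt _ _ (Fin.castSucc_lt_succ_iff.2 hji.le),
          Fin.succAbove_of_castSucc_lt _ _ (Fin.castSucc_lt_castSucc_iff.2 hji)]
        linear_combination (-y j.castSucc) * hab
      · rw [if_neg (lt_irrefl _), if_pos rfl, Fin.succAbove_succ_self, Fin.succAbove_castSucc_self]
        linear_combination (-(y j.castSucc + y j.succ)) * hab + hx
      · rw [if_neg (not_lt.2 (Fin.le_def.1 hij.le)), if_neg hij.ne',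
          Fin.succAbove_of_le_castSucc _ _ (Fin.succ_le_castSucc_iff.2 hij),
          Fin.succAbove_of_le_castSucc _ _ hij.le]
        linear_combination (-y j.succ) * hab
  rw [hcomb]
  exact convex_permutohedron y (comp_mem_permutohedron y _) (comp_mem_permutohedron y _) ha hb hab

theorem cons_mem_permutohedron_of_mem (h1 : y i.succ ≤ x) (h2 : x ≤ y i.castSucc)
    {q : Fin n → ℝ} (hq : q ∈ permutohedron (sectionVector y x i)) :
    (Fin.cons x q : Fin (n + 1) → ℝ) ∈ permutohedron y := by
  have hconvex :
      Convex ℝ {q : Fin n → ℝ | (Fin.cons x q : Fin (n + 1) → ℝ) ∈ permutohedron y} := by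
    intro q₁ hq₁ q₂ hq₂ a b ha hb hab
    have hcons : (Fin.cons x (a • q₁ + b • q₂) : Fin (n + 1) → ℝ) =
        a • (Fin.cons x q₁ : Fin (n + 1) → ℝ) + b • (Fin.cons x q₂ : Fin (n + 1) → ℝ) := by
      ext j
      cases j using Fin.cases with
      | zero => simp [← add_mul, hab]
      | succ j => simp
    simpa [hcons] using convex_permutohedron y hq₁ hq₂ ha hb hab
  refine convexHull_min ?_ hconvex hq
  rintro _ ⟨w, rfl⟩
  have hlift : (Fin.cons x (sectionVector y x i ∘ w) : Fin (n + 1) → ℝ) =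
      (Fin.cons x (sectionVector y x i) : Fin (n + 1) → ℝ) ∘
        Equiv.Perm.decomposeFin.symm (0, w) := by
    ext j
    cases j using Fin.cases <;> simp
  simpa [hlift] using
    comp_mem_permutohedron_of_mem (cons_sectionVector_mem_permutohedron h1 h2) _

end SectionVector

theorem mem_permutohedron_of_isMajorizedBy :
    ∀ {m : ℕ} {y p : Fin m → ℝ}, Antitone y → IsMajorizedBy p y → p ∈ permutohedron y
  | 0, y, p, _, _ => Subsingleton.elim y p ▸ self_mem_permutohedron y
  | 1, y, p, _, hp => by
    have : p = y := funext fun j => by simpa [Subsingleton.elim j 0] using hp.1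
    exact this ▸ self_mem_permutohedron y
  | n + 2, y, p, hy, hp => by
    obtain ⟨hlast, hzero⟩ := hp.apply_zero_mem_Icc
    obtain ⟨i, h1, h2⟩ := exists_succ_le_le_castSucc y hlast hzero
    rw [← Fin.cons_self_tail p] at hp ⊢
    exact cons_mem_permutohedron_of_mem h1 h2 <|
      mem_permutohedron_of_isMajorizedBy (sectionVector_antitone hy h1 h2)
        ((isMajorizedBy_cons_iff hy h1 h2).1 hp)

theorem mem_permutohedron_iff_isMajorizedBy {y p : Fin m → ℝ} (hy : Antitone y) :
    p ∈ permutohedron y ↔ IsMajorizedBy p y :=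
  ⟨isMajorizedBy_of_mem_permutohedron hy, mem_permutohedron_of_isMajorizedBy hy⟩

theorem cons_mem_permutohedron_iff {n : ℕ} {y : Fin (n + 1) → ℝ} {x : ℝ} {i : Fin n}
    (hy : Antitone y) (h1 : y i.succ ≤ x) (h2 : x ≤ y i.castSucc) {q : Fin n → ℝ} :
    (Fin.cons x q : Fin (n + 1) → ℝ) ∈ permutohedron y ↔
      q ∈ permutohedron (sectionVector y x i) := by
  rw [mem_permutohedron_iff_isMajorizedBy hy,
    mem_permutohedron_iff_isMajorizedBy (sectionVector_antitone hy h1 h2),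
    isMajorizedBy_cons_iff hy h1 h2]

end CrossSection

/-- the cross section of the permutohedron with first coordinate `x`
is `{x} × P(y₁,…,y_{i-1}, y_i + y_{i+1} - x, y_{i+2},…,y_{n+1})`. -/
theorem permutohedron_cross_section (n : ℕ) (y : Fin (n + 1) → ℝ) (hy : Antitone y)
    (x : ℝ) (i : Fin n) (h1 : y i.succ ≤ x) (h2 : x ≤ y i.castSucc) :
    {p ∈ permutohedron y | p 0 = x} =
      (fun q : Fin n → ℝ => Fin.cons x q) ''
        permutohedron (fun j : Fin n =>
          if (j : ℕ) < (i : ℕ) then y j.castSucc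
          else if j = i then y i.castSucc + y i.succ - x
          else y j.succ) := by
  change _ = _ '' permutohedron (sectionVector y x i)
  ext p
  constructor
  · rintro ⟨hp, rfl⟩
    rw [← Fin.cons_self_tail p] at hp
    exact ⟨Fin.tail p, (cons_mem_permutohedron_iff hy h1 h2).1 hp, Fin.cons_self_tail p⟩
  · rintro ⟨q, hq, rfl⟩
    exact ⟨(cons_mem_permutohedron_iff hy h1 h2).2 hq, rfl⟩

end MixedEulerian
end

section
/- Let 1 ≤ k ≤ n and let C = (∅,...,∅, {1,...,n}, ∅,...,∅) be the division of {1,...,n} with all elements in position k. Then a permutation w ∈ S_n is a C-permutation if and only if w has exactly k-1 descents. Consequently, the number of C-permutations equals the Eulerian number A(n,k). -/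
open scoped Pointwise
open MeasureTheory Nat

namespace MixedEulerian

/-! The divisions reached from `midDivision n k` by admissible deletions all have the shape
`cutDivision len p S c`: the `len` remaining elements `S` lie in the two adjacent blocks `p - 1`
and `p`, split at the cut `c`, and every other block is empty. Deleting `s` preserves this shape,
moving the cut to `s` and `p` to `p - 1` when `s < c`, and the cut to `s + 1` when `c ≤ s`;
`s` is admissible exactly when the new configuration still has a block for every remaining
element. Prepending the cut to the word turns this into descent bookkeeping:
`listDescents (c :: s :: w) = p` iff `listDescents (c' :: w) = p'` for the new cut `c'` and
position `p'`. By induction, the `C`-permutations of `cutDivision len p S c` are the arrangements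
`w` of `S` with `listDescents (c :: w) = p`, and `midDivision n k` is the case `c = 0`,
`p = k - 1`. -/

section Descents

variable {α : Type*} [LinearOrder α]

lemma listDescents_cons_cons (a b : α) (l : List α) :
    listDescents (a :: b :: l) = listDescents (b :: l) + if b < a then 1 else 0 := by
  simp [listDescents, List.countP_cons]

lemma listDescents_cons_le_length (a : α) (l : List α) : listDescents (a :: l) ≤ l.length := by
  simpa [listDescents] using List.countP_le_length (l := (a :: l).zip l)

lemma listDescents_cons_of_forall_le {a : α} {l : List α} (h : ∀ x ∈ l, a ≤ x) :
    listDescents (a :: l) = listDescents l := by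
  cases l with
  | nil => rfl
  | cons b l => simp [listDescents_cons_cons, not_lt.2 (h b (by simp))]

lemma listDescents_cons_congr {a b : α} {l : List α} (h : ∀ x ∈ l, x < a ↔ x < b) :
    listDescents (a :: l) = listDescents (b :: l) := by
  cases l with
  | nil => rfl
  | cons x l => simp only [listDescents_cons_cons, h x (by simp)]

lemma le_of_listDescents_cons_eq_zero {a : α} {l : List α} (h : listDescents (a :: l) = 0) :
    ∀ x ∈ l, a ≤ x := by
  induction l generalizing a with
  | nil => simp
  | cons b l ih =>
    rw [listDescents_cons_cons] at h
    have hab : a ≤ b := by by_contra! hba; simp [hba] at h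
    rintro x (_ | ⟨_, hx⟩)
    · exact hab
    · exact hab.trans (ih (by omega) x hx)

lemma lt_of_listDescents_cons_eq_length {a : α} {l : List α}
    (h : listDescents (a :: l) = l.length) : ∀ x ∈ l, x < a := by
  induction l generalizing a with
  | nil => simp
  | cons b l ih =>
    rw [listDescents_cons_cons, List.length_cons] at h
    have hle := listDescents_cons_le_length b l
    have hba : b < a := by by_contra hab; simp [hab] at h; omega
    rintro x (_ | ⟨_, hx⟩)
    · exact hba
    · exact (ih (by simp [hba] at h; omega) x hx).trans hba

end Descents

lemma eq_of_getD_eq {α : Type*} {l₁ l₂ : List α} (d : α) (hlen : l₁.length = l₂.length)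
    (h : ∀ j < l₁.length, l₁.getD j d = l₂.getD j d) : l₁ = l₂ :=
  List.ext_getElem hlen fun j h₁ h₂ => by
    have hj := h j h₁
    rwa [List.getD_eq_getElem _ d h₁, List.getD_eq_getElem _ d h₂] at hj

lemma getD_take_append {α : Type*} {l L : List α} {m j : ℕ} (d : α) (hm : m ≤ l.length) :
    (l.take m ++ L).getD j d = if j < m then l.getD j d else L.getD (j - m) d := by
  have hlen : (l.take m).length = m := List.length_take_of_le hm
  split_ifs with hj
  · rw [List.getD_append _ _ _ _ (by omega), List.getD_eq_getElem?_getD,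
      List.getElem?_take_of_lt hj, ← List.getD_eq_getElem?_getD]
  · rw [List.getD_append_right _ _ _ _ (by omega), hlen]

lemma exists_mem_of_mem_getD {α : Type*} {C : List (Finset α)} {a : α} {j : ℕ}
    (h : a ∈ C.getD j ∅) : ∃ B ∈ C, a ∈ B := by
  rw [List.getD_eq_getElem?_getD] at h
  cases hj : C[j]? with
  | none => simp [hj] at h
  | some B => exact ⟨B, List.mem_of_getElem? hj, by simpa [hj] using h⟩

lemma coe_cons_eq_val_iff {α : Type*} [DecidableEq α] {a : α} {l : List α} {S : Finset α} :
    ((a :: l : List α) : Multiset α) = S.val ↔ a ∈ S ∧ (l : Multiset α) = (S.erase a).val := by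
  rw [Finset.erase_val, ← Multiset.cons_coe]
  constructor
  · intro h
    refine ⟨by simp [← Finset.mem_val, ← h], by rw [← h, Multiset.erase_cons_head]⟩
  · rintro ⟨ha, h⟩
    rw [h, Multiset.cons_erase ha]

section Deletion

variable {C : List (Finset ℕ)} {s i : ℕ}

lemma lt_length_of_mem_getD_iff (h : ∀ j, s ∈ C.getD j ∅ ↔ j = i) : i < C.length := by
  by_contra! hi
  have hs := (h i).2 rfl
  rw [List.getD_eq_default _ _ hi] at hs
  simp at hs

lemma findIdx_eq_of_mem_getD_iff (h : ∀ j, s ∈ C.getD j ∅ ↔ j = i) :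
    C.findIdx (fun b => decide (s ∈ b)) = i := by
  have hi := lt_length_of_mem_getD_iff h
  rw [List.findIdx_eq hi]
  refine ⟨?_, fun j hj => ?_⟩
  · have hs := (h i).2 rfl
    rw [List.getD_eq_getElem _ _ hi] at hs
    simpa using hs
  · have hs := mt (h j).1 hj.ne
    rw [List.getD_eq_getElem _ _ (hj.trans hi)] at hs
    simpa using hs

lemma admissibleA_iff_of_mem_getD_iff (h : ∀ j, s ∈ C.getD j ∅ ↔ j = i) :
    AdmissibleA C s ↔ (i = 0 ∧ ∀ t ∈ C.getD i ∅, s ≤ t) ∨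
      (i = C.length - 1 ∧ ∀ t ∈ C.getD i ∅, t ≤ s) ∨ (0 < i ∧ i + 1 < C.length) := by
  constructor
  · rintro ⟨j, -, hj, hadm⟩
    obtain rfl := (h j).1 hj
    rcases hadm with ⟨rfl, hmin⟩ | hadm
    exacts [Or.inl ⟨rfl, hmin⟩, Or.inr hadm]
  · refine fun hadm => ⟨i, lt_length_of_mem_getD_iff h, (h i).2 rfl, ?_⟩
    rcases hadm with ⟨rfl, hmin⟩ | hadm
    exacts [Or.inl ⟨rfl, hmin⟩, Or.inr hadm]

lemma length_deleteA (h : ∀ j, s ∈ C.getD j ∅ ↔ j = i) :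
    (deleteA C s).length = C.length - 1 := by
  have hi := lt_length_of_mem_getD_iff h
  simp only [deleteA, findIdx_eq_of_mem_getD_iff h]
  split_ifs <;> simp <;> omega

lemma getD_deleteA (h : ∀ j, s ∈ C.getD j ∅ ↔ j = i) {j : ℕ} (hj : j + 1 < C.length) :
    (deleteA C s).getD j ∅ =
      if j + 1 < i then C.getD j ∅
      else if j + 1 = i then C.getD j ∅ ∪ (C.getD i ∅).filter (· < s)
      else if j = i then (C.getD i ∅).filter (s < ·) ∪ C.getD (j + 1) ∅
      else C.getD (j + 1) ∅ := by
  have hlt := lt_length_of_mem_getD_iff h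
  simp only [deleteA, findIdx_eq_of_mem_getD_iff h, if_neg (show ¬ C.length ≤ 1 by omega)]
  by_cases h0 : i = 0
  · subst h0
    rw [if_pos rfl]
    rcases j with _ | j
    · rfl
    · rw [if_neg (by omega), if_neg (by omega), if_neg (by omega), List.getD_cons_succ]
      simp only [List.getD_eq_getElem?_getD, List.getElem?_drop]
      congr 2; omega
  rw [if_neg h0]
  by_cases hlast : i = C.length - 1
  · rw [if_pos hlast, getD_take_append _ (by omega)]
    split_ifs <;> first | rfl | omega | skip
    obtain rfl : j = i - 1 := by omega
    simp
  · rw [if_neg hlast, List.append_assoc, getD_take_append _ (by omega)]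
    split_ifs <;> first | rfl | omega | skip
    · obtain rfl : j = i - 1 := by omega
      simp
    · subst j
      rw [show i - (i - 1) = 1 by omega]; rfl
    · rw [List.getD_append_right _ _ _ _ (by simp; omega)]
      simp only [List.getD_eq_getElem?_getD, List.getElem?_drop, List.length_cons,
        List.length_nil]
      congr 2; omega

end Deletion

section CutDivision

def cutBlock (p : ℕ) (S : Finset ℕ) (c i : ℕ) : Finset ℕ :=
  if i + 1 = p then S.filter (· < c) else if i = p then S.filter (c ≤ ·) else ∅

def cutDivision (len p : ℕ) (S : Finset ℕ) (c : ℕ) : List (Finset ℕ) :=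
  (List.range len).map (cutBlock p S c)

/-- The last two fields say that the elements below and above the cut have a block to lie in:
block `p - 1` exists iff `p ≠ 0`, and block `p` iff `p ≠ len`. -/
structure IsCutDivision (len p : ℕ) (S : Finset ℕ) (c : ℕ) : Prop where
  card_eq : S.card = len
  le_len : p ≤ len
  le_of_eq_zero : p = 0 → ∀ x ∈ S, c ≤ x
  lt_of_eq_len : p = len → ∀ x ∈ S, x < c

variable {len p c s : ℕ} {S : Finset ℕ}

@[simp] lemma length_cutDivision : (cutDivision len p S c).length = len := by
  simp [cutDivision]

lemma getD_cutDivision (j : ℕ) :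
    (cutDivision len p S c).getD j ∅ = if j < len then cutBlock p S c j else ∅ := by
  split_ifs with hj <;> simp [cutDivision, hj]

lemma mem_of_mem_getD_cutDivision {j : ℕ} (h : s ∈ (cutDivision len p S c).getD j ∅) :
    s ∈ S := by
  rw [getD_cutDivision, cutBlock] at h
  split_ifs at h <;> simp_all

lemma getD_cutDivision_pred (hp : p ≠ 0) (hpl : p ≤ len) :
    (cutDivision len p S c).getD (p - 1) ∅ = S.filter (· < c) := by
  rw [getD_cutDivision, if_pos (by omega), cutBlock, if_pos (by omega)]

lemma getD_cutDivision_self (hpl : p < len) :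
    (cutDivision len p S c).getD p ∅ = S.filter (c ≤ ·) := by
  rw [getD_cutDivision, if_pos hpl, cutBlock, if_neg (by omega), if_pos rfl]

lemma mem_getD_cutDivision_iff_of_lt (h : IsCutDivision len p S c) (hs : s ∈ S)
    (hsc : s < c) (j : ℕ) : s ∈ (cutDivision len p S c).getD j ∅ ↔ j = p - 1 := by
  have hp : p ≠ 0 := fun hp => (h.le_of_eq_zero hp s hs).not_gt hsc
  have := h.le_len
  rw [getD_cutDivision, cutBlock]
  split_ifs <;> simp [hs, hsc, hsc.not_ge] <;> omega

lemma mem_getD_cutDivision_iff_of_le (h : IsCutDivision len p S c) (hs : s ∈ S)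
    (hcs : c ≤ s) (j : ℕ) : s ∈ (cutDivision len p S c).getD j ∅ ↔ j = p := by
  have hp : p ≠ len := fun hp => (h.lt_of_eq_len hp s hs).not_ge hcs
  have := h.le_len
  rw [getD_cutDivision, cutBlock]
  split_ifs <;> simp [hs, hcs, hcs.not_gt] <;> omega

lemma deleteA_cutDivision_of_lt (h : IsCutDivision len p S c) (hs : s ∈ S) (hsc : s < c) :
    deleteA (cutDivision len p S c) s = cutDivision (len - 1) (p - 1) (S.erase s) s := by
  have hblock := mem_getD_cutDivision_iff_of_lt h hs hsc
  have hp : p ≠ 0 := fun hp => (h.le_of_eq_zero hp s hs).not_gt hsc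
  have := h.le_len
  refine eq_of_getD_eq ∅ (by rw [length_deleteA hblock]; simp) fun j hj => ?_
  rw [length_deleteA hblock, length_cutDivision] at hj
  rw [getD_deleteA hblock (by simp; omega)]
  simp only [getD_cutDivision, cutBlock]
  split_ifs <;> ext x <;> grind

lemma deleteA_cutDivision_of_le (h : IsCutDivision len p S c) (hs : s ∈ S) (hcs : c ≤ s) :
    deleteA (cutDivision len p S c) s = cutDivision (len - 1) p (S.erase s) (s + 1) := by
  have hblock := mem_getD_cutDivision_iff_of_le h hs hcs
  have hp : p ≠ len := fun hp => (h.lt_of_eq_len hp s hs).not_ge hcs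
  have := h.le_len
  refine eq_of_getD_eq ∅ (by rw [length_deleteA hblock]; simp) fun j hj => ?_
  rw [length_deleteA hblock, length_cutDivision] at hj
  rw [getD_deleteA hblock (by simp; omega)]
  simp only [getD_cutDivision, cutBlock]
  split_ifs <;> ext x <;> grind

lemma admissibleA_cutDivision_iff_of_lt (h : IsCutDivision len p S c) (hs : s ∈ S)
    (hsc : s < c) :
    AdmissibleA (cutDivision len p S c) s ↔ IsCutDivision (len - 1) (p - 1) (S.erase s) s := by
  have hp : p ≠ 0 := fun hp => (h.le_of_eq_zero hp s hs).not_gt hsc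
  have hcard : (S.erase s).card = len - 1 := by rw [Finset.card_erase_of_mem hs, h.card_eq]
  have hsingle : ∀ x ∈ S, len = 1 → x = s := fun x hx hl => by
    by_contra hne
    simpa [hcard, hl] using Finset.card_pos.2 ⟨x, Finset.mem_erase.2 ⟨hne, hx⟩⟩
  have := h.le_len
  have := h.lt_of_eq_len
  rw [admissibleA_iff_of_mem_getD_iff (mem_getD_cutDivision_iff_of_lt h hs hsc),
    getD_cutDivision_pred hp h.le_len, length_cutDivision]
  simp only [Finset.mem_filter, and_imp]
  constructor
  · intro hadm
    refine ⟨hcard, by omega, fun hp x hx => ?_, fun hp x hx => ?_⟩ <;>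
      rw [Finset.mem_erase] at hx <;> grind
  · intro h'
    have h0 := h'.le_of_eq_zero
    have hl := h'.lt_of_eq_len
    simp only [Finset.mem_erase] at h0 hl
    grind

lemma admissibleA_cutDivision_iff_of_le (h : IsCutDivision len p S c) (hs : s ∈ S)
    (hcs : c ≤ s) :
    AdmissibleA (cutDivision len p S c) s ↔ IsCutDivision (len - 1) p (S.erase s) (s + 1) := by
  have hp : p ≠ len := fun hp => (h.lt_of_eq_len hp s hs).not_ge hcs
  have hcard : (S.erase s).card = len - 1 := by rw [Finset.card_erase_of_mem hs, h.card_eq]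
  have hsingle : ∀ x ∈ S, len = 1 → x = s := fun x hx hl => by
    by_contra hne
    simpa [hcard, hl] using Finset.card_pos.2 ⟨x, Finset.mem_erase.2 ⟨hne, hx⟩⟩
  have := h.le_len
  have := h.le_of_eq_zero
  rw [admissibleA_iff_of_mem_getD_iff (mem_getD_cutDivision_iff_of_le h hs hcs),
    getD_cutDivision_self (by omega), length_cutDivision]
  simp only [Finset.mem_filter, and_imp]
  constructor
  · intro hadm
    refine ⟨hcard, by omega, fun hp x hx => ?_, fun hp x hx => ?_⟩ <;>
      rw [Finset.mem_erase] at hx <;> grind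
  · intro h'
    have h0 := h'.le_of_eq_zero
    have hl := h'.lt_of_eq_len
    simp only [Finset.mem_erase] at h0 hl
    grind

lemma forall_mem_cutDivision_eq_empty_iff (h : IsCutDivision len p S c) :
    (∀ B ∈ cutDivision len p S c, B = ∅) ↔ S = ∅ := by
  refine ⟨fun hempty => Finset.eq_empty_of_forall_notMem fun s hs => ?_, fun hS => ?_⟩
  · obtain ⟨j, hj⟩ : ∃ j, s ∈ (cutDivision len p S c).getD j ∅ := by
      rcases lt_or_ge s c with hsc | hcs
      exacts [⟨_, (mem_getD_cutDivision_iff_of_lt h hs hsc _).2 rfl⟩,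
        ⟨_, (mem_getD_cutDivision_iff_of_le h hs hcs _).2 rfl⟩]
    obtain ⟨B, hB, hsB⟩ := exists_mem_of_mem_getD hj
    simp [hempty B hB] at hsB
  · obtain rfl : len = 0 := by rw [← h.card_eq, hS, Finset.card_empty]
    simp [cutDivision]

lemma isCutDivision_of_listDescents {w : List ℕ} (hw : (w : Multiset ℕ) = S.val) :
    IsCutDivision S.card (listDescents (c :: w)) S c := by
  have hlen : S.card = w.length := by rw [Finset.card_def, ← hw, Multiset.coe_card]
  have hmem : ∀ x, x ∈ S ↔ x ∈ w := fun x => by rw [← Finset.mem_val, ← hw, Multiset.mem_coe]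
  refine ⟨rfl, hlen ▸ listDescents_cons_le_length c w, fun h0 x hx => ?_, fun hl x hx => ?_⟩
  · exact le_of_listDescents_cons_eq_zero h0 x ((hmem x).1 hx)
  · exact lt_of_listDescents_cons_eq_length (hlen ▸ hl) x ((hmem x).1 hx)

lemma exists_deleteA_cutDivision_eq (h : IsCutDivision len p S c) (hs : s ∈ S) :
    ∃ p' c', deleteA (cutDivision len p S c) s = cutDivision (len - 1) p' (S.erase s) c' ∧
      (AdmissibleA (cutDivision len p S c) s ↔ IsCutDivision (len - 1) p' (S.erase s) c') ∧
      ∀ w : List ℕ, s ∉ w → (listDescents (c :: s :: w) = p ↔ listDescents (c' :: w) = p') := by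
  rcases lt_or_ge s c with hsc | hcs
  · have hp : p ≠ 0 := fun hp => (h.le_of_eq_zero hp s hs).not_gt hsc
    refine ⟨p - 1, s, deleteA_cutDivision_of_lt h hs hsc,
      admissibleA_cutDivision_iff_of_lt h hs hsc, fun w _ => ?_⟩
    rw [listDescents_cons_cons, if_pos hsc]
    omega
  · refine ⟨p, s + 1, deleteA_cutDivision_of_le h hs hcs,
      admissibleA_cutDivision_iff_of_le h hs hcs, fun w hsw => ?_⟩
    rw [listDescents_cons_cons, if_neg (not_lt.2 hcs), add_zero]
    rw [listDescents_cons_congr fun x hx => ?_]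
    have : x ≠ s := fun hxs => hsw (hxs ▸ hx)
    omega

theorem isCPermA_cutDivision_iff (h : IsCutDivision len p S c) (w : List ℕ) :
    IsCPermA (cutDivision len p S c) w ↔ (w : Multiset ℕ) = S.val ∧ listDescents (c :: w) = p := by
  induction w generalizing len p S c with
  | nil =>
    have hp : S = ∅ → p = 0 := fun hS => by simpa [← h.card_eq, hS] using h.le_len
    simp only [IsCPermA, forall_mem_cutDivision_eq_empty_iff h]
    constructor
    · rintro rfl
      exact ⟨rfl, (hp rfl).symm⟩
    · rintro ⟨hS, -⟩
      exact Finset.val_eq_zero.1 hS.symm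
  | cons s w ih =>
    by_cases hs : s ∈ S
    swap
    · have hadm : ¬ AdmissibleA (cutDivision len p S c) s :=
        fun ⟨_, _, hj, _⟩ => hs (mem_of_mem_getD_cutDivision hj)
      simp [IsCPermA, hadm, coe_cons_eq_val_iff, hs]
    obtain ⟨p', c', hdel, hadm, hdes⟩ := exists_deleteA_cutDivision_eq h hs
    have hsw : (w : Multiset ℕ) = (S.erase s).val → s ∉ w := fun hw hsw => by
      have hmem : s ∈ (S.erase s).val := hw ▸ Multiset.mem_coe.2 hsw
      exact Finset.notMem_erase s S hmem
    simp only [IsCPermA, hdel, hadm, coe_cons_eq_val_iff]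
    constructor
    · rintro ⟨h', hperm⟩
      obtain ⟨hw, hdes'⟩ := (ih h').1 hperm
      exact ⟨⟨hs, hw⟩, (hdes w (hsw hw)).2 hdes'⟩
    · rintro ⟨⟨-, hw⟩, hdes'⟩
      rw [hdes w (hsw hw)] at hdes'
      have h' := isCutDivision_of_listDescents (c := c') hw
      rw [hdes', Finset.card_erase_of_mem hs, h.card_eq] at h'
      exact ⟨h', (ih h').2 ⟨hw, hdes'⟩⟩

end CutDivision

lemma midDivision_eq_cutDivision {n k : ℕ} (h1 : 1 ≤ k) (h2 : k ≤ n) :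
    midDivision n k = cutDivision n (k - 1) (Finset.Icc 1 n) 0 := by
  refine eq_of_getD_eq ∅ (by simp [midDivision]; omega) fun j hj => ?_
  simp only [midDivision, List.length_append, List.length_replicate, List.length_singleton] at hj
  rw [getD_cutDivision, if_pos (by omega), cutBlock]
  simp only [midDivision, List.getD_eq_getElem?_getD, List.getElem?_append, List.getElem?_replicate,
    List.length_append, List.length_replicate, List.length_singleton]
  split_ifs <;> first | omega | (subst j; simp) | simp

lemma isCPermA_midDivision_iff {n k : ℕ} (h1 : 1 ≤ k) (h2 : k ≤ n) (w : List ℕ) :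
    IsCPermA (midDivision n k) w ↔ w.Perm (List.range' 1 n) ∧ listDescents w = k - 1 := by
  have hcut : IsCutDivision n (k - 1) (Finset.Icc 1 n) 0 :=
    ⟨by simp, by omega, fun _ x _ => x.zero_le, by omega⟩
  rw [midDivision_eq_cutDivision h1 h2, isCPermA_cutDivision_iff hcut,
    listDescents_cons_of_forall_le fun x _ => x.zero_le, Nat.Icc_eq_range', Nat.add_sub_cancel]
  simp

/-- for the division with all elements in position `k`, a permutation of
`{1,…,n}` is a `C`-permutation iff it has exactly `k-1` descents; hence the number of
`C`-permutations is the Eulerian number `A(n,k)`. -/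
theorem cperm_descents (n k : ℕ) (h1 : 1 ≤ k) (h2 : k ≤ n) :
    (∀ w : List ℕ, w.Perm (List.range' 1 n) →
      (IsCPermA (midDivision n k) w ↔ listDescents w = k - 1)) ∧
    Nat.card {w : List ℕ // IsCPermA (midDivision n k) w} = eulerianA n k := by
  refine ⟨fun w hw => by rw [isCPermA_midDivision_iff h1 h2, and_iff_right hw], ?_⟩
  rw [eulerianA, List.countP_eq_length_filter,
    ← List.toFinset_card_of_nodup ((List.nodup_permutations _ List.nodup_range').filter _),
    ← Nat.card_eq_finsetCard]
  exact Nat.card_congr (Equiv.subtypeEquivRight fun w => by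
    simp [isCPermA_midDivision_iff h1 h2, List.mem_permutations])

end MixedEulerian
end
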